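/- (Lemma 4.1, upper bound) Let n ≥ 2, 2 ≤ k ≤ n, 1/2 < s < 1, and let u : ℝ^n → ℝ be Lipschitz with constant L and semiconcave with constant SC. Then there exists a constant μ₁ > 0 depending only on n, k, s, SC, L such that for every x ∈ ℝ^n and every orthonormal family e_1, …, e_{n−k+1} of vectors in ℝ^n, (1−s) · (1/2) ∫_{ℝ^{n−k+1}} δ(u, x, ȳ_1 e_1 + ⋯ + ȳ_{n−k+1} e_{n−k+1}) |ȳ|^{−(n−k+1+2s)} dȳ ≤ μ₁, where the integral is over ȳ = (ȳ_1, …, ȳ_{n−k+1}) ∈ ℝ^{n−k+1}. -/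

import Mathlib

open MeasureTheory Matrix Filter Metric Set
open scoped RealInnerProductSpace Classical

noncomputable section

abbrev E (n : ℕ) := EuclideanSpace ℝ (Fin n)

/-- second difference δ(u,x,y) = u(x+y) + u(x−y) − 2u(x) -/
def ddelta {n : ℕ} (u : E n → ℝ) (x y : E n) : ℝ := u (x + y) + u (x - y) - 2 * u x

/-- apply a matrix to a Euclidean vector -/
def mApp {n : ℕ} (M : Matrix (Fin n) (Fin n) ℝ) (y : E n) : E n :=
  (WithLp.equiv 2 (Fin n → ℝ)).symm (M.mulVec ((WithLp.equiv 2 (Fin n → ℝ)) y))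

/-- the positive definite square root of a positive definite matrix (junk value `1` otherwise) -/
def msqrt {n : ℕ} (M : Matrix (Fin n) (Fin n) ℝ) : Matrix (Fin n) (Fin n) ℝ :=
  if h : M.PosDef then
    h.posSemidef.1.eigenvectorUnitary.1 * diagonal ((↑) ∘ (Real.sqrt ∘ h.posSemidef.1.eigenvalues)) *
      (star h.posSemidef.1.eigenvectorUnitary : Matrix (Fin n) (Fin n) ℝ) else 1

/-- largest eigenvalue of a symmetric matrix -/
def lamMax {n : ℕ} (M : Matrix (Fin n) (Fin n) ℝ) : ℝ :=
  if h : M.IsHermitian then ⨆ i, h.eigenvalues i else 0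

/-- smallest eigenvalue of a symmetric matrix -/
def lamMin {n : ℕ} (M : Matrix (Fin n) (Fin n) ℝ) : ℝ :=
  if h : M.IsHermitian then ⨅ i, h.eigenvalues i else 0

/-- the eigenvalue vector λ(A) of a symmetric matrix (junk value `0` otherwise) -/
def eigenv {n : ℕ} (A : Matrix (Fin n) (Fin n) ℝ) : Fin n → ℝ :=
  if h : A.IsHermitian then h.eigenvalues else 0

/-- ω_n : volume of the unit ball in ℝ^n -/
def omegaN (n : ℕ) : ℝ := (volume (ball (0 : E n) 1)).toReal

/-- u is Lipschitz with constant L -/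
def LipWith {n : ℕ} (L : ℝ) (u : E n → ℝ) : Prop := ∀ x y, |u x - u y| ≤ L * ‖x - y‖

/-- u is semiconcave with constant SC -/
def SemiconcaveWith {n : ℕ} (SC : ℝ) (u : E n → ℝ) : Prop :=
  ∀ x y, ddelta u x y ≤ SC * ‖y‖ ^ 2

/-- the quantity (1/2) ∫ δ(u,x,y) |√M⁻¹ y|^{−(n+2s)} det (√M⁻¹) dy -/
def kernelInt {n : ℕ} (s : ℝ) (M : Matrix (Fin n) (Fin n) ℝ) (u : E n → ℝ) (x : E n) : ℝ :=
  (1/2) * ∫ y : E n, ddelta u x y / ‖mApp (msqrt M)⁻¹ y‖ ^ ((n : ℝ) + 2*s) * ((msqrt M)⁻¹).det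

/-- elementary symmetric polynomial σ_j in n variables -/
def esymmP (n j : ℕ) (x : Fin n → ℝ) : ℝ :=
  ∑ A ∈ Finset.univ.powersetCard j, ∏ i ∈ A, x i

/-- the cone Γ_k -/
def GammaK (n k : ℕ) : Set (Fin n → ℝ) := {x | ∀ j, 1 ≤ j → j ≤ k → 0 < esymmP n j x}

/-- σ_k of a matrix, as a polynomial of the entries (σ_k(T) = σ_k(λ(T)) for symmetric T) -/
def sigmaMat (n k : ℕ) (T : Matrix (Fin n) (Fin n) ℝ) : ℝ :=
  (-1)^k * T.charpoly.coeff (n - k)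

/-- the family 𝓜_k of matrices D(σ_k^{1/k})(T), T symmetric with λ(T) ∈ Γ_k -/
def MM (n k : ℕ) : Set (Matrix (Fin n) (Fin n) ℝ) :=
  {M | ∃ T : Matrix (Fin n) (Fin n) ℝ, T.IsSymm ∧ eigenv T ∈ GammaK n k ∧
    M = Matrix.of fun i j => (1/(k:ℝ)) * sigmaMat n k T ^ ((1 - (k:ℝ))/(k:ℝ)) *
      deriv (fun t : ℝ => sigmaMat n k (T + t • Matrix.single i j 1)) 0}

/-- the fractional k-Hessian operator F_s[u](x) -/
def FsK {n : ℕ} (k : ℕ) (s : ℝ) (u : E n → ℝ) (x : E n) : ℝ :=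
  sInf ((fun M => kernelInt s M u x) '' MM n k)

/-- the strictly elliptic fractional k-Hessian operator F_s^θ[u](x) -/
def FsKtheta {n : ℕ} (k : ℕ) (s θ : ℝ) (u : E n → ℝ) (x : E n) : ℝ :=
  sInf ((fun M => kernelInt s M u x) '' {M | M ∈ MM n k ∧ θ ≤ lamMin M})

/-- the Hessian matrix D²u(x) -/
def hess {n : ℕ} (u : E n → ℝ) (x : E n) : Matrix (Fin n) (Fin n) ℝ :=
  Matrix.of fun i j =>
    fderiv ℝ (fun z => fderiv ℝ u z (EuclideanSpace.single j (1:ℝ))) x (EuclideanSpace.single i (1:ℝ))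

/-- F(A) = f(λ(A)), extended to all matrices by symmetrization -/
def Fgen {n : ℕ} (f : (Fin n → ℝ) → ℝ) (A : Matrix (Fin n) (Fin n) ℝ) : ℝ :=
  f (eigenv ((1/2 : ℝ) • (A + Aᵀ)))

/-- DF(A) : the matrix of partial derivatives {∂F/∂A_{ij}(A)} -/
def DFgen {n : ℕ} (f : (Fin n → ℝ) → ℝ) (T : Matrix (Fin n) (Fin n) ℝ) :
    Matrix (Fin n) (Fin n) ℝ :=
  Matrix.of fun i j => deriv (fun t : ℝ => Fgen f (T + t • Matrix.single i j 1)) 0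

end

open scoped ENNReal in
lemma tsum_ofReal_geom_ne_top {K ρ : ℝ} (hK : 0 ≤ K) (hρ0 : 0 ≤ ρ) (hρ1 : ρ < 1) :
    ∑' j : ℕ, ENNReal.ofReal (K * ρ ^ j) ≠ ⊤ := by
  have h : ∀ j : ℕ, ENNReal.ofReal (K * ρ ^ j)
      = ENNReal.ofReal K * ENNReal.ofReal ρ ^ j := fun j => by
    rw [ENNReal.ofReal_mul hK, ENNReal.ofReal_pow hρ0]
  simp_rw [h, ENNReal.tsum_mul_left, ENNReal.tsum_geometric]
  refine ENNReal.mul_ne_top ENNReal.ofReal_ne_top ?_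
  rw [ENNReal.inv_ne_top]
  have : ENNReal.ofReal ρ < 1 := by
    rw [← ENNReal.ofReal_one]; exact ENNReal.ofReal_lt_ofReal_iff_of_nonneg hρ0 |>.mpr hρ1
  exact (tsub_pos_of_lt this).ne'

lemma inv_pow_eq_rpow (j : ℕ) : ((2:ℝ) ^ j)⁻¹ = (2:ℝ) ^ (-(j:ℝ)) := by
  rw [← Real.rpow_natCast 2 j, ← Real.rpow_neg (by norm_num)]

open scoped ENNReal in
lemma lint_ne_top (m : ℕ) (hm : 1 ≤ m) (p SC L : ℝ) (hSC : 0 ≤ SC) (hL : 0 ≤ L)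
    (hp1 : (m:ℝ) + 1 < p) (hp2 : p < (m:ℝ) + 2) :
    ∫⁻ y : E m, ENNReal.ofReal (min (SC * ‖y‖ ^ 2) (2 * L * ‖y‖) / ‖y‖ ^ p) ≠ ⊤ := by
  set F : E m → ℝ≥0∞ := fun y => ENNReal.ofReal (min (SC * ‖y‖ ^ 2) (2 * L * ‖y‖) / ‖y‖ ^ p)
    with hF
  have hm' : (1:ℝ) ≤ (m:ℝ) := by exact_mod_cast hm
  have hp0 : (2:ℝ) < p := by linarith
  have h2 : (0:ℝ) ≤ 2 := by norm_num
  set V : ℝ≥0∞ := volume (ball (0 : E m) 1) with hV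
  have hVne : V ≠ ⊤ := measure_ball_lt_top.ne
  set ω : ℝ := V.toReal with hω
  have hωnn : 0 ≤ ω := ENNReal.toReal_nonneg
  have hVeq : V = ENNReal.ofReal ω := (ENNReal.ofReal_toReal hVne).symm
  have hfr : Module.finrank ℝ (E m) = m := by simp [finrank_euclideanSpace]
  have hCB : ∀ r : ℝ, 0 ≤ r →
      volume (closedBall (0 : E m) r) = ENNReal.ofReal (r ^ m * ω) := by
    intro r hr
    rw [Measure.addHaar_closedBall volume _ hr, hfr, ← hV, hVeq,
      ← ENNReal.ofReal_mul (by positivity)]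
  set A : ℕ → Set (E m) := fun j =>
    {y | ((2:ℝ) ^ (j+1))⁻¹ < ‖y‖} ∩ closedBall 0 (((2:ℝ) ^ j)⁻¹) with hA
  set B : ℕ → Set (E m) := fun j =>
    {y | (2:ℝ) ^ j ≤ ‖y‖} ∩ closedBall 0 ((2:ℝ) ^ (j+1)) with hB
  have hmeasA : ∀ j, MeasurableSet (A j) := fun j =>
    ((isOpen_lt continuous_const continuous_norm).measurableSet).inter measurableSet_closedBall
  have hmeasB : ∀ j, MeasurableSet (B j) := fun j =>
    ((isClosed_le continuous_const continuous_norm).measurableSet).inter measurableSet_closedBall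
  -- covering
  have hcover : (univ : Set (E m)) ⊆ {0} ∪ ((⋃ j, A j) ∪ (⋃ j, B j)) := by
    intro y _
    rcases eq_or_ne y 0 with rfl | hy0
    · exact Or.inl rfl
    right
    have hy : 0 < ‖y‖ := norm_pos_iff.mpr hy0
    rcases lt_or_ge ‖y‖ 1 with hlt | hge
    · left
      have h1 : (1:ℝ) ≤ ‖y‖⁻¹ := (one_le_inv₀ hy).mpr hlt.le
      obtain ⟨j, hj1, hj2⟩ := exists_nat_pow_near h1 one_lt_two
      refine mem_iUnion.mpr ⟨j, ?_, ?_⟩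
      · exact (inv_lt_comm₀ (by positivity) hy).mpr hj2
      · rw [mem_closedBall, dist_zero_right]
        exact (le_inv_comm₀ hy (by positivity)).mpr hj1
    · right
      obtain ⟨j, hj1, hj2⟩ := exists_nat_pow_near hge one_lt_two
      refine mem_iUnion.mpr ⟨j, hj1, ?_⟩
      rw [mem_closedBall, dist_zero_right]; exact hj2.le
  -- pointwise bounds
  have hboundA : ∀ j : ℕ, ∀ y ∈ A j,
      F y ≤ ENNReal.ofReal (SC * (((2:ℝ) ^ (j+1))⁻¹) ^ ((2:ℝ) - p)) := by
    intro j y hy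
    obtain ⟨hy1, _⟩ := hy
    have hc : (0:ℝ) < ((2:ℝ) ^ (j+1))⁻¹ := by positivity
    have hyp : 0 < ‖y‖ := lt_trans hc hy1
    apply ENNReal.ofReal_le_ofReal
    have step1 : min (SC * ‖y‖ ^ 2) (2 * L * ‖y‖) / ‖y‖ ^ p ≤ SC * ‖y‖ ^ 2 / ‖y‖ ^ p := by
      have hd : (0:ℝ) < ‖y‖ ^ p := Real.rpow_pos_of_pos hyp p
      exact div_le_div_of_nonneg_right (min_le_left _ _) hd.le
    refine step1.trans ?_
    have step2 : SC * ‖y‖ ^ 2 / ‖y‖ ^ p = SC * ‖y‖ ^ ((2:ℝ) - p) := by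
      rw [Real.rpow_sub hyp, ← Real.rpow_two, mul_div_assoc]
    rw [step2]
    gcongr SC * ?_
    exact Real.rpow_le_rpow_of_nonpos hc hy1.le (by linarith)
  have hboundB : ∀ j : ℕ, ∀ y ∈ B j,
      F y ≤ ENNReal.ofReal (2 * L * ((2:ℝ) ^ j) ^ ((1:ℝ) - p)) := by
    intro j y hy
    obtain ⟨hy1, _⟩ := hy
    have hc : (0:ℝ) < (2:ℝ) ^ j := by positivity
    have hyp : 0 < ‖y‖ := lt_of_lt_of_le hc hy1
    apply ENNReal.ofReal_le_ofReal
    have step1 : min (SC * ‖y‖ ^ 2) (2 * L * ‖y‖) / ‖y‖ ^ p ≤ 2 * L * ‖y‖ / ‖y‖ ^ p := by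
      have hd : (0:ℝ) < ‖y‖ ^ p := Real.rpow_pos_of_pos hyp p
      exact div_le_div_of_nonneg_right (min_le_right _ _) hd.le
    refine step1.trans ?_
    have step2 : 2 * L * ‖y‖ / ‖y‖ ^ p = 2 * L * ‖y‖ ^ ((1:ℝ) - p) := by
      rw [Real.rpow_sub hyp, Real.rpow_one, mul_div_assoc]
    rw [step2]
    gcongr 2 * L * ?_
    exact Real.rpow_le_rpow_of_nonpos hc hy1 (by linarith)
  -- geometric-form bounds per annulus
  have htermA : ∀ j : ℕ, (∫⁻ y in A j, F y) ≤
      ENNReal.ofReal ((SC * ω * (2:ℝ) ^ (p - 2)) * ((2:ℝ) ^ (p - 2 - (m:ℝ))) ^ j) := by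
    intro j
    have hc : (0:ℝ) < ((2:ℝ) ^ (j+1))⁻¹ := by positivity
    calc (∫⁻ y in A j, F y)
        ≤ ∫⁻ _ in A j, ENNReal.ofReal (SC * (((2:ℝ) ^ (j+1))⁻¹) ^ ((2:ℝ) - p)) :=
          setLIntegral_mono' (hmeasA j) (hboundA j)
      _ = ENNReal.ofReal (SC * (((2:ℝ) ^ (j+1))⁻¹) ^ ((2:ℝ) - p)) * volume (A j) :=
          setLIntegral_const _ _
      _ ≤ ENNReal.ofReal (SC * (((2:ℝ) ^ (j+1))⁻¹) ^ ((2:ℝ) - p)) *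
            volume (closedBall (0 : E m) (((2:ℝ) ^ j)⁻¹)) :=
          mul_le_mul_right (measure_mono inter_subset_right) _
      _ = ENNReal.ofReal ((SC * (((2:ℝ) ^ (j+1))⁻¹) ^ ((2:ℝ) - p)) *
            ((((2:ℝ) ^ j)⁻¹) ^ m * ω)) := by
          rw [hCB _ (by positivity), ← ENNReal.ofReal_mul (by positivity)]
      _ = ENNReal.ofReal ((SC * ω * (2:ℝ) ^ (p - 2)) * ((2:ℝ) ^ (p - 2 - (m:ℝ))) ^ j) := by
          congr 1
          have e1 : (((2:ℝ) ^ (j+1))⁻¹) ^ ((2:ℝ) - p)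
              = (2:ℝ) ^ ((-((j:ℝ)+1)) * (2 - p)) := by
            rw [inv_pow_eq_rpow (j+1), ← Real.rpow_mul h2]
            push_cast; ring_nf
          have e2 : (((2:ℝ) ^ j)⁻¹) ^ m = (2:ℝ) ^ ((-(j:ℝ)) * (m:ℝ)) := by
            rw [inv_pow_eq_rpow j, ← Real.rpow_natCast ((2:ℝ) ^ (-(j:ℝ))) m,
              ← Real.rpow_mul h2]
          have e3 : ((2:ℝ) ^ (p - 2 - (m:ℝ))) ^ j = (2:ℝ) ^ ((p - 2 - (m:ℝ)) * (j:ℝ)) := by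
            rw [← Real.rpow_natCast ((2:ℝ) ^ (p - 2 - (m:ℝ))) j, ← Real.rpow_mul h2]
          rw [e1, e2, e3]
          have e4 : (2:ℝ) ^ ((-((j:ℝ)+1)) * (2 - p)) * (2:ℝ) ^ ((-(j:ℝ)) * (m:ℝ))
              = (2:ℝ) ^ (p - 2) * (2:ℝ) ^ ((p - 2 - (m:ℝ)) * (j:ℝ)) := by
            rw [← Real.rpow_add two_pos, ← Real.rpow_add two_pos]
            congr 1; ring
          linear_combination (SC * ω) * e4
  have htermB : ∀ j : ℕ, (∫⁻ y in B j, F y) ≤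
      ENNReal.ofReal ((2 * L * ω * (2:ℝ) ^ (m:ℝ)) * ((2:ℝ) ^ ((1:ℝ) - p + (m:ℝ))) ^ j) := by
    intro j
    calc (∫⁻ y in B j, F y)
        ≤ ∫⁻ _ in B j, ENNReal.ofReal (2 * L * ((2:ℝ) ^ j) ^ ((1:ℝ) - p)) :=
          setLIntegral_mono' (hmeasB j) (hboundB j)
      _ = ENNReal.ofReal (2 * L * ((2:ℝ) ^ j) ^ ((1:ℝ) - p)) * volume (B j) :=
          setLIntegral_const _ _
      _ ≤ ENNReal.ofReal (2 * L * ((2:ℝ) ^ j) ^ ((1:ℝ) - p)) *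
            volume (closedBall (0 : E m) ((2:ℝ) ^ (j+1))) :=
          mul_le_mul_right (measure_mono inter_subset_right) _
      _ = ENNReal.ofReal ((2 * L * ((2:ℝ) ^ j) ^ ((1:ℝ) - p)) *
            (((2:ℝ) ^ (j+1)) ^ m * ω)) := by
          rw [hCB _ (by positivity), ← ENNReal.ofReal_mul (by positivity)]
      _ = ENNReal.ofReal ((2 * L * ω * (2:ℝ) ^ (m:ℝ)) * ((2:ℝ) ^ ((1:ℝ) - p + (m:ℝ))) ^ j) := by
          congr 1
          have e1 : ((2:ℝ) ^ j) ^ ((1:ℝ) - p) = (2:ℝ) ^ ((j:ℝ) * (1 - p)) := by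
            rw [← Real.rpow_natCast 2 j, ← Real.rpow_mul h2]
          have e2 : ((2:ℝ) ^ (j+1)) ^ m = (2:ℝ) ^ (((j:ℝ)+1) * (m:ℝ)) := by
            rw [← Real.rpow_natCast 2 (j+1), ← Real.rpow_natCast ((2:ℝ) ^ (((j:ℕ)+1:ℕ):ℝ)) m,
              ← Real.rpow_mul h2]
            push_cast; ring_nf
          have e3 : ((2:ℝ) ^ ((1:ℝ) - p + (m:ℝ))) ^ j
              = (2:ℝ) ^ (((1:ℝ) - p + (m:ℝ)) * (j:ℝ)) := by
            rw [← Real.rpow_natCast ((2:ℝ) ^ ((1:ℝ) - p + (m:ℝ))) j, ← Real.rpow_mul h2]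
          rw [e1, e2, e3]
          have e4 : (2:ℝ) ^ ((j:ℝ) * (1 - p)) * (2:ℝ) ^ (((j:ℝ)+1) * (m:ℝ))
              = (2:ℝ) ^ ((m:ℝ)) * (2:ℝ) ^ (((1:ℝ) - p + (m:ℝ)) * (j:ℝ)) := by
            rw [← Real.rpow_add two_pos, ← Real.rpow_add two_pos]
            congr 1; ring
          linear_combination (2 * L * ω) * e4
  -- put it together
  have hsum : (∫⁻ y, F y) ≤ (∫⁻ y in ({0} : Set (E m)), F y) +
      ((∑' j, ∫⁻ y in A j, F y) + (∑' j, ∫⁻ y in B j, F y)) := by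
    calc (∫⁻ y, F y) = ∫⁻ y in univ, F y := (setLIntegral_univ F).symm
      _ ≤ ∫⁻ y in ({0} ∪ ((⋃ j, A j) ∪ (⋃ j, B j))), F y := lintegral_mono_set hcover
      _ ≤ (∫⁻ y in ({0} : Set (E m)), F y) + ∫⁻ y in ((⋃ j, A j) ∪ (⋃ j, B j)), F y :=
          lintegral_union_le _ _ _
      _ ≤ _ := by
          gcongr
          refine (lintegral_union_le _ _ _).trans ?_
          gcongr
          · exact lintegral_iUnion_le _ _
          · exact lintegral_iUnion_le _ _
  have h0 : (∫⁻ y in ({0} : Set (E m)), F y) = 0 := by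
    rw [lintegral_singleton]
    have : F 0 = 0 := by simp [hF]
    rw [this, zero_mul]
  have hSA : (∑' j, ∫⁻ y in A j, F y) ≠ ⊤ := by
    refine ne_top_of_le_ne_top (tsum_ofReal_geom_ne_top
      (K := SC * ω * (2:ℝ) ^ (p - 2)) (ρ := (2:ℝ) ^ (p - 2 - (m:ℝ)))
      (mul_nonneg (mul_nonneg hSC hωnn) (Real.rpow_pos_of_pos two_pos _).le)
      (Real.rpow_pos_of_pos two_pos _).le
      (Real.rpow_lt_one_of_one_lt_of_neg one_lt_two (by linarith)))
      (ENNReal.tsum_le_tsum htermA)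
  have hSB : (∑' j, ∫⁻ y in B j, F y) ≠ ⊤ := by
    refine ne_top_of_le_ne_top (tsum_ofReal_geom_ne_top
      (K := 2 * L * ω * (2:ℝ) ^ ((m:ℝ))) (ρ := (2:ℝ) ^ ((1:ℝ) - p + (m:ℝ)))
      (mul_nonneg (mul_nonneg (by linarith) hωnn) (Real.rpow_pos_of_pos two_pos _).le)
      (Real.rpow_pos_of_pos two_pos _).le
      (Real.rpow_lt_one_of_one_lt_of_neg one_lt_two (by linarith)))
      (ENNReal.tsum_le_tsum htermB)
  refine ne_top_of_le_ne_top ?_ hsum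
  rw [h0, zero_add]
  exact ENNReal.add_ne_top.mpr ⟨hSA, hSB⟩

lemma orthonormal_norm_sum {m n : ℕ} (e : Fin m → E n) (he : Orthonormal ℝ e)
    (yb : E m) : ‖∑ i, yb i • e i‖ = ‖yb‖ := by
  refine (sq_eq_sq₀ (norm_nonneg _) (norm_nonneg _)).mp ?_
  calc ‖∑ i, yb i • e i‖ ^ 2 = ⟪∑ i, yb i • e i, ∑ i, yb i • e i⟫ :=
        (real_inner_self_eq_norm_sq _).symm
    _ = ∑ i, yb i * yb i := by simpa using he.inner_sum yb yb Finset.univ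
    _ = ⟪yb, yb⟫ := by rw [PiLp.inner_apply]; simp only [RCLike.inner_apply, conj_trivial]
    _ = ‖yb‖ ^ 2 := real_inner_self_eq_norm_sq _

theorem stmt_8 (n k : ℕ) (hn : 2 ≤ n) (hk2 : 2 ≤ k) (hkn : k ≤ n)
    (s L SC : ℝ) (hs : 1/2 < s) (hs1 : s < 1) (hL : 0 < L) (hSC : 0 < SC) :
    ∃ μ₁ > 0, ∀ (u : E n → ℝ), LipWith L u → SemiconcaveWith SC u →
      ∀ (x : E n) (e : Fin (n - k + 1) → E n), Orthonormal ℝ e →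
        (1 - s) * ((1/2) * ∫ yb : E (n - k + 1),
          ddelta u x (∑ i, yb i • e i) / ‖yb‖ ^ ((n:ℝ) - (k:ℝ) + 1 + 2*s)) ≤ μ₁ := by
  set m : ℕ := n - k + 1 with hm
  have hm1 : 1 ≤ m := Nat.le_add_left 1 (n - k)
  set p : ℝ := (n:ℝ) - (k:ℝ) + 1 + 2*s with hpdef
  have hcast : (m:ℝ) = (n:ℝ) - (k:ℝ) + 1 := by
    rw [hm]; push_cast [Nat.cast_sub hkn]; ring
  have hp1 : (m:ℝ) + 1 < p := by rw [hcast, hpdef]; linarith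
  have hp2 : p < (m:ℝ) + 2 := by rw [hcast, hpdef]; linarith
  have hppos : 0 < p := by
    have : (1:ℝ) ≤ (m:ℝ) := by exact_mod_cast hm1
    linarith
  set G : E m → ℝ := fun y => min (SC * ‖y‖ ^ 2) (2 * L * ‖y‖) / ‖y‖ ^ p with hG
  have hGnt : ∫⁻ y : E m, ENNReal.ofReal (G y) ≠ ⊤ :=
    lint_ne_top m hm1 p SC L hSC.le hL.le hp1 hp2
  set C : ℝ := (∫⁻ y : E m, ENNReal.ofReal (G y)).toReal with hC
  have hCnn : 0 ≤ C := ENNReal.toReal_nonneg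
  refine ⟨(1 - s)/2 * C + 1, by nlinarith, ?_⟩
  intro u hLip hSemi x e he
  set f : E m → ℝ := fun yb => ddelta u x (∑ i, yb i • e i) / ‖yb‖ ^ p with hf
  have hfG : ∀ yb : E m, f yb ≤ G yb := by
    intro yb
    rcases eq_or_ne yb 0 with rfl | hyb
    · simp only [hf, hG, norm_zero, Real.zero_rpow hppos.ne', div_zero, le_refl]
    · have hpos : 0 < ‖yb‖ := norm_pos_iff.mpr hyb
      have hd : (0:ℝ) < ‖yb‖ ^ p := Real.rpow_pos_of_pos hpos p
      refine div_le_div_of_nonneg_right (le_min ?_ ?_) hd.le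
      · have := hSemi x (∑ i, yb i • e i)
        rwa [orthonormal_norm_sum e he yb] at this
      · have h1 : u (x + ∑ i, yb i • e i) - u x ≤ L * ‖yb‖ := by
          have := hLip (x + ∑ i, yb i • e i) x
          rw [add_sub_cancel_left, orthonormal_norm_sum e he yb] at this
          exact (le_abs_self _).trans this
        have h2 : u (x - ∑ i, yb i • e i) - u x ≤ L * ‖yb‖ := by
          have := hLip (x - ∑ i, yb i • e i) x
          rw [sub_sub_cancel_left, norm_neg, orthonormal_norm_sum e he yb] at this
          exact (le_abs_self _).trans this
        have : ddelta u x (∑ i, yb i • e i)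
            = (u (x + ∑ i, yb i • e i) - u x) + (u (x - ∑ i, yb i • e i) - u x) := by
          rw [ddelta]; ring
        rw [this]; linarith
  have hIle : (∫ yb : E m, f yb) ≤ C := by
    by_cases hInt : Integrable f
    · rw [integral_eq_lintegral_pos_part_sub_lintegral_neg_part hInt]
      have hle : (∫⁻ yb : E m, ENNReal.ofReal (f yb))
          ≤ ∫⁻ y : E m, ENNReal.ofReal (G y) :=
        lintegral_mono fun yb => ENNReal.ofReal_le_ofReal (hfG yb)
      have := ENNReal.toReal_mono hGnt hle
      have h2 : (0:ℝ) ≤ (∫⁻ yb : E m, ENNReal.ofReal (-(f yb))).toReal :=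
        ENNReal.toReal_nonneg
      rw [← hC] at this
      linarith
    · rw [integral_undef hInt]; exact hCnn
  have hIle' : (1 - s) * ((1/2) * ∫ yb : E m, f yb) ≤ (1 - s)/2 * C := by
    have h := mul_le_mul_of_nonneg_left hIle (by linarith : (0:ℝ) ≤ (1 - s)/2)
    calc (1 - s) * ((1/2) * ∫ yb : E m, f yb) = (1 - s)/2 * ∫ yb : E m, f yb := by ring
      _ ≤ (1 - s)/2 * C := h
  calc (1 - s) * ((1/2) * ∫ yb : E (n - k + 1),
        ddelta u x (∑ i, yb i • e i) / ‖yb‖ ^ ((n:ℝ) - (k:ℝ) + 1 + 2*s))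
      = (1 - s) * ((1/2) * ∫ yb : E m, f yb) := rfl
    _ ≤ (1 - s)/2 * C := hIle'
    _ ≤ (1 - s)/2 * C + 1 := by linarith
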